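/- Let g : V₀ → V be an isometric embedding of finite-dimensional inner product spaces and f : V → W a linear map. Then for all λ ≥ 0, F(f)(λ) ≤ F(f ∘ g)(λ) + (dim V − dim V₀). -/

import Mathlib

/-! A subspace `U ≤ V` on which `‖f v‖ ≤ λ‖v‖` pulls back along the isometry `g` to a subspace
of `V₀` on which `‖f (g v)‖ ≤ λ‖v‖`; rank–nullity for `V₀ → V ⧸ U`, whose kernel is `U.comap g`,
shows the pullback loses at most `dim V - dim V₀` dimensions. -/

open scoped RealInnerProductSpace

variable {V E : Type*}

noncomputable def c1 [Fintype E] [DecidableEq V] (v0 v1 : E → V) :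
    EuclideanSpace ℝ E →ₗ[ℝ] EuclideanSpace ℝ V where
  toFun a := WithLp.toLp 2 (fun v =>
    (∑ e ∈ Finset.univ.filter (fun e => v1 e = v), a e)
      - (∑ e ∈ Finset.univ.filter (fun e => v0 e = v), a e))
  map_add' a b := by
    ext v
    simp [PiLp.add_apply, Finset.sum_add_distrib] <;>
    ring
  map_smul' c a := by
    ext v
    simp [PiLp.smul_apply, smul_eq_mul, ← Finset.mul_sum, mul_sub] <;> ring

/-- Spectral density function of a linear map of inner product spaces. -/
noncomputable def sdf {V W : Type*} [NormedAddCommGroup V] [InnerProductSpace ℝ V]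
    [NormedAddCommGroup W] [InnerProductSpace ℝ W]
    (f : V →ₗ[ℝ] W) (lam : ℝ) : ℕ :=
  sSup {n : ℕ | ∃ U : Submodule ℝ V, Module.finrank ℝ U = n ∧ ∀ v ∈ U, ‖f v‖ ≤ lam * ‖v‖}

/-- Degree of a vertex in a finite directed multigraph (loops count twice). -/
def vdeg [Fintype E] [DecidableEq V] (v0 v1 : E → V) (v : V) : ℕ :=
  (Finset.univ.filter fun e => v0 e = v).card + (Finset.univ.filter fun e => v1 e = v).card

/-- Maximal vertex degree of a finite multigraph. -/
def maxDeg [Fintype V] [Fintype E] [DecidableEq V] (v0 v1 : E → V) : ℕ :=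
  Finset.univ.sup (vdeg v0 v1)

/-- The simple graph underlying a directed multigraph. -/
def supportGraph (v0 v1 : E → V) : SimpleGraph V where
  Adj u w := u ≠ w ∧ ∃ e, (v0 e = u ∧ v1 e = w) ∨ (v0 e = w ∧ v1 e = u)
  symm := by
    constructor
    rintro u w ⟨h, e, he⟩
    exact ⟨h.symm, e, he.symm⟩
  loopless := by constructor; rintro u ⟨h, _⟩; exact h rfl

open Module

theorem Submodule.finrank_add_le_finrank_comap_add {K V₀ V : Type*} [DivisionRing K]
    [AddCommGroup V₀] [Module K V₀] [FiniteDimensional K V₀]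
    [AddCommGroup V] [Module K V] [FiniteDimensional K V]
    (U : Submodule K V) (g : V₀ →ₗ[K] V) :
    finrank K U + finrank K V₀ ≤ finrank K (U.comap g) + finrank K V := by
  have hker : LinearMap.ker (U.mkQ ∘ₗ g) = U.comap g := by
    rw [LinearMap.ker_comp, Submodule.ker_mkQ]
  have hrank := LinearMap.finrank_range_add_finrank_ker (U.mkQ ∘ₗ g)
  have hrange := Submodule.finrank_le (LinearMap.range (U.mkQ ∘ₗ g))
  have hquot := Submodule.finrank_quotient_add_finrank U
  rw [hker] at hrank
  omega

section sdf

variable {V W : Type*} [NormedAddCommGroup V] [InnerProductSpace ℝ V] [FiniteDimensional ℝ V]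
  [NormedAddCommGroup W] [InnerProductSpace ℝ W]

theorem bddAbove_sdf_set (f : V →ₗ[ℝ] W) (lam : ℝ) :
    BddAbove {n : ℕ | ∃ U : Submodule ℝ V, finrank ℝ U = n ∧ ∀ v ∈ U, ‖f v‖ ≤ lam * ‖v‖} :=
  ⟨finrank ℝ V, by rintro n ⟨U, rfl, -⟩; exact U.finrank_le⟩

theorem exists_finrank_eq_sdf (f : V →ₗ[ℝ] W) (lam : ℝ) :
    ∃ U : Submodule ℝ V, finrank ℝ U = sdf f lam ∧ ∀ v ∈ U, ‖f v‖ ≤ lam * ‖v‖ := by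
  refine Nat.sSup_mem ?_ (bddAbove_sdf_set f lam)
  exact ⟨0, ⊥, finrank_bot ℝ V, by simp⟩

theorem finrank_le_sdf {f : V →ₗ[ℝ] W} {lam : ℝ} {U : Submodule ℝ V}
    (hU : ∀ v ∈ U, ‖f v‖ ≤ lam * ‖v‖) : finrank ℝ U ≤ sdf f lam :=
  le_csSup (bddAbove_sdf_set f lam) ⟨U, rfl, hU⟩

end sdf

theorem sdf_comp_isometry_general {V₀ V W : Type*}
    [NormedAddCommGroup V₀] [InnerProductSpace ℝ V₀]
    [NormedAddCommGroup V] [InnerProductSpace ℝ V] [FiniteDimensional ℝ V]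
    [NormedAddCommGroup W] [InnerProductSpace ℝ W]
    (g : V₀ →ₗ[ℝ] V) (hg : ∀ x y : V₀, ⟪g x, g y⟫ = ⟪x, y⟫)
    (f : V →ₗ[ℝ] W) (lam : ℝ) :
    (sdf f lam : ℤ) ≤ (sdf (f ∘ₗ g) lam : ℤ)
      + (Module.finrank ℝ V - Module.finrank ℝ V₀ : ℤ) := by
  let gi : V₀ →ₗᵢ[ℝ] V := g.isometryOfInner hg
  have hnorm : ∀ v, ‖g v‖ = ‖v‖ := gi.norm_map
  have : FiniteDimensional ℝ V₀ := .of_injective g gi.injective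
  obtain ⟨U, hUdim, hU⟩ := exists_finrank_eq_sdf f lam
  have hcomap : finrank ℝ (U.comap g) ≤ sdf (f ∘ₗ g) lam :=
    finrank_le_sdf fun v hv => by simpa [hnorm] using hU (g v) hv
  have hcodim := U.finrank_add_le_finrank_comap_add g
  omega

/-- If g is an isometric embedding then F(f)(λ) ≤ F(f ∘ g)(λ) + (dim V − dim V₀). -/
theorem sdf_comp_isometry {V₀ V W : Type*}
    [NormedAddCommGroup V₀] [InnerProductSpace ℝ V₀] [FiniteDimensional ℝ V₀]
    [NormedAddCommGroup V] [InnerProductSpace ℝ V] [FiniteDimensional ℝ V]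
    [NormedAddCommGroup W] [InnerProductSpace ℝ W] [FiniteDimensional ℝ W]
    (g : V₀ →ₗ[ℝ] V) (hg : ∀ x y : V₀, ⟪g x, g y⟫ = ⟪x, y⟫)
    (f : V →ₗ[ℝ] W) (lam : ℝ) (hlam : 0 ≤ lam) :
    (sdf f lam : ℤ) ≤ (sdf (f ∘ₗ g) lam : ℤ)
      + (Module.finrank ℝ V - Module.finrank ℝ V₀ : ℤ) :=
  sdf_comp_isometry_general g hg f lam
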